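/- arXiv:1708.05611 — 4 statements merged into one kernel-verified Lean document; each statement's English description precedes it below -/
import Mathlib

section
/- There is a universal constant C such that for every metric space (M, d_M) on n ≥ 2 points, there exist finitely many hierarchically separated trees T_1,…,T_N, each of depth at most C·log n and each having the n points of M as its leaf set, together with nonnegative weights λ_1,…,λ_N summing to 1, such that for every pair of points u, v ∈ M: d_M(u,v) ≤ Σ_{i=1}^N λ_i · d_{T_i}(u,v) ≤ C·(log n)·d_M(u,v), where d_{T_i} denotes the shortest-path metric of T_i. -/
/-!
Bourgain's embedding in its `L¹` form: averaging over scales `t ≤ log₂ n + 1` and over random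
subsets `A` that keep each point with probability `2⁻ᵗ`, the line metrics
`|d(u, A) - d(v, A)|` are each `1`-Lipschitz, while scale `t` contributes a constant fraction of
`r_t - r_{t-1}`, where `r_t` is the radius at which balls around `u` and `v` reach `2ᵗ` points;
these increments telescope to `d(u, v) / 4`. Line metrics are nonnegative combinations of cut
metrics, so `d ≤ ∑ μ_S δ_S ≤ O(log n) d` for some weights `μ`. A cut metric `δ_S` is, up to a
small leaf-edge term, the metric of a depth-two HST whose root has the two sides of the cut as
children; normalising `μ` gives the distribution.
-/


open scoped Classical

/-- A finite rooted tree, encoded by a parent function together with a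
consistent depth function. Edge lengths are given separately: `len v` is the
length of the edge from `v` to its parent (irrelevant at the root). -/
structure FinRootedTree where
  V : Type
  finiteV : Finite V
  root : V
  parent : V → V
  depth : V → ℕ
  parent_root : parent root = root
  depth_root : depth root = 0
  depth_parent : ∀ v, v ≠ root → depth v = depth (parent v) + 1

/-- Auxiliary fueled recursion computing the distance from a vertex to the root. -/
noncomputable def distAux (T : FinRootedTree) (len : T.V → ℝ) : ℕ → T.V → ℝ
  | 0, _ => 0
  | n + 1, v => if v = T.root then 0 else len v + distAux T len n (T.parent v)

/-- Distance from a vertex to the root (sum of edge lengths on the root path). -/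
noncomputable def distToRoot (T : FinRootedTree) (len : T.V → ℝ) (v : T.V) : ℝ :=
  distAux T len (T.depth v) v

/-- `a` is an ancestor of `v` (possibly `a = v`). -/
def IsAnc (T : FinRootedTree) (a v : T.V) : Prop := ∃ k : ℕ, T.parent^[k] v = a

/-- The shortest-path metric of the tree with edge lengths `len`:
`d(u,v) = dtr(u) + dtr(v) - 2·dtr(lca u v)`, the lca being the common ancestor
furthest from the root. -/
noncomputable def treeDist (T : FinRootedTree) (len : T.V → ℝ) (u v : T.V) : ℝ :=
  distToRoot T len u + distToRoot T len v -
    2 * sSup (distToRoot T len '' {a : T.V | IsAnc T a u ∧ IsAnc T a v})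

/-- A leaf: a vertex with no children. -/
def IsLeaf (T : FinRootedTree) (v : T.V) : Prop := ∀ u : T.V, T.parent u = v → u = v

/-- The HST condition on edge lengths: positive lengths, and every non-root
edge is at most half as long as its parent edge. -/
def IsHSTLen (T : FinRootedTree) (len : T.V → ℝ) : Prop :=
  (∀ v, v ≠ T.root → 0 < len v) ∧
  (∀ v, v ≠ T.root → T.parent v ≠ T.root → len v ≤ len (T.parent v) / 2)

open Function

section RootedTree

variable {T : FinRootedTree} {len : T.V → ℝ}

theorem distToRoot_root : distToRoot T len T.root = 0 := by
  simp [distToRoot, T.depth_root, distAux]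

theorem distToRoot_of_ne_root {v : T.V} (hv : v ≠ T.root) :
    distToRoot T len v = len v + distToRoot T len (T.parent v) := by
  rw [distToRoot, T.depth_parent v hv, distAux, if_neg hv, distToRoot]

theorem distToRoot_parent_le (hlen : ∀ v, v ≠ T.root → 0 ≤ len v) (v : T.V) :
    distToRoot T len (T.parent v) ≤ distToRoot T len v := by
  by_cases hv : v = T.root
  · rw [hv, T.parent_root]
  · rw [distToRoot_of_ne_root hv]
    linarith [hlen v hv]

theorem distToRoot_le_of_isAnc (hlen : ∀ v, v ≠ T.root → 0 ≤ len v) {a v : T.V}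
    (h : IsAnc T a v) : distToRoot T len a ≤ distToRoot T len v := by
  obtain ⟨k, rfl⟩ := h
  induction k generalizing v with
  | zero => rfl
  | succ k ih =>
    rw [iterate_succ_apply]
    exact ih.trans (distToRoot_parent_le hlen v)

theorem treeDist_eq_of_isLCA (hlen : ∀ v, v ≠ T.root → 0 ≤ len v) {a u v : T.V}
    (hau : IsAnc T a u) (hav : IsAnc T a v)
    (hlca : ∀ b, IsAnc T b u → IsAnc T b v → IsAnc T b a) :
    treeDist T len u v =
      distToRoot T len u + distToRoot T len v - 2 * distToRoot T len a := by
  have hmax : IsGreatest (distToRoot T len '' {b | IsAnc T b u ∧ IsAnc T b v})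
      (distToRoot T len a) := by
    refine ⟨⟨a, ⟨hau, hav⟩, rfl⟩, ?_⟩
    rintro _ ⟨b, ⟨hbu, hbv⟩, rfl⟩
    exact distToRoot_le_of_isAnc hlen (hlca b hbu hbv)
  rw [treeDist, hmax.csSup_eq]

end RootedTree

section TwoLevel

variable {M β : Type} [Finite M] [Finite β] (σ : M → β)

abbrev twoLevelTree : FinRootedTree where
  V := Option β ⊕ M
  finiteV := inferInstance
  root := .inl none
  parent := Sum.elim (fun _ => .inl none) (fun x => .inl (some (σ x)))
  depth := Sum.elim (fun b => if b.isSome then 1 else 0) (fun _ => 2)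
  parent_root := rfl
  depth_root := rfl
  depth_parent := by rintro ((_ | b) | x) h <;> simp_all

def twoLevelLen (a b : ℝ) : (twoLevelTree σ).V → ℝ := Sum.elim (fun _ => a) (fun _ => b)

variable {σ}

theorem twoLevelTree_isAnc_inr_iff {c : (twoLevelTree σ).V} {x : M} :
    IsAnc (twoLevelTree σ) c (.inr x) ↔ c = .inr x ∨ c = .inl (some (σ x)) ∨ c = .inl none := by
  constructor
  · rintro ⟨_ | _ | k, rfl⟩
    exacts [Or.inl rfl, Or.inr (Or.inl rfl), Or.inr (Or.inr (iterate_fixed rfl k))]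
  · rintro (rfl | rfl | rfl)
    exacts [⟨0, rfl⟩, ⟨1, rfl⟩, ⟨2, rfl⟩]

theorem twoLevelTree_isAnc_root (c : (twoLevelTree σ).V) :
    IsAnc (twoLevelTree σ) (.inl none) c := by
  rcases c with (_ | _) | _
  exacts [⟨0, rfl⟩, ⟨1, rfl⟩, ⟨2, rfl⟩]

variable {a b : ℝ}

theorem twoLevelTree_distToRoot_inl (c : β) :
    distToRoot (twoLevelTree σ) (twoLevelLen σ a b) (.inl (some c)) = a := by
  rw [distToRoot_of_ne_root (by simp [twoLevelTree])]
  exact add_eq_left.mpr distToRoot_root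

theorem twoLevelTree_distToRoot_inr (x : M) :
    distToRoot (twoLevelTree σ) (twoLevelLen σ a b) (.inr x) = b + a := by
  rw [distToRoot_of_ne_root (by simp [twoLevelTree])]
  exact congrArg (b + ·) (twoLevelTree_distToRoot_inl (σ x))

theorem twoLevelTree_treeDist_inr (ha : 0 ≤ a) (hb : 0 ≤ b) (u v : M) :
    treeDist (twoLevelTree σ) (twoLevelLen σ a b) (.inr u) (.inr v) =
      (if σ u = σ v then 0 else 2 * a) + (if u = v then 0 else 2 * b) := by
  have hlen : ∀ c, c ≠ (twoLevelTree σ).root → 0 ≤ twoLevelLen σ a b c := by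
    rintro (_ | _) _ <;> assumption
  have hlca := fun c => treeDist_eq_of_isLCA (T := twoLevelTree σ) hlen (a := c)
    (u := .inr u) (v := .inr v)
  by_cases huv : u = v
  · subst huv
    rw [hlca (.inr u) ⟨0, rfl⟩ ⟨0, rfl⟩ fun _ h _ => h]
    simp only [if_true]
    ring
  simp only [twoLevelTree_isAnc_inr_iff] at hlca
  by_cases hσ : σ u = σ v
  · rw [hlca (.inl (some (σ u))) (by simp) (by simp [hσ]) ?_, twoLevelTree_distToRoot_inr,
      twoLevelTree_distToRoot_inr, twoLevelTree_distToRoot_inl]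
    · simp [hσ, huv]
      ring
    rintro c (rfl | rfl | rfl) hcv
    · simp [huv] at hcv
    · exact ⟨0, rfl⟩
    · exact twoLevelTree_isAnc_root _
  · rw [hlca (.inl none) (by simp) (by simp) ?_, twoLevelTree_distToRoot_inr,
      twoLevelTree_distToRoot_inr, distToRoot_root]
    · simp [hσ, huv]
      ring
    rintro c (rfl | rfl | rfl) hcv
    · simp [huv] at hcv
    · simp [hσ] at hcv
    · exact ⟨0, rfl⟩

theorem twoLevelTree_isHSTLen (hb : 0 < b) (hba : b ≤ a / 2) :
    IsHSTLen (twoLevelTree σ) (twoLevelLen σ a b) := by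
  refine ⟨?_, ?_⟩
  · rintro ((_ | _) | _) h
    · exact absurd rfl h
    · show 0 < a
      linarith
    · exact hb
  · rintro ((_ | _) | _) h hp
    · exact absurd rfl h
    · exact absurd rfl hp
    · exact hba

theorem twoLevelTree_isLeaf_inr (x : M) : IsLeaf (twoLevelTree σ) (.inr x) := by
  rintro ((_ | _) | _) h <;> simp at h

theorem twoLevelTree_exists_inr_of_isLeaf [Nonempty β] (hσ : Surjective σ)
    {c : (twoLevelTree σ).V} (hc : IsLeaf (twoLevelTree σ) c) : ∃ x, .inr x = c := by
  rcases c with (_ | c) | x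
  · have := hc (.inl (some (Classical.arbitrary β))) rfl
    simp at this
  · obtain ⟨x, rfl⟩ := hσ c
    have := hc (.inr x) rfl
    simp at this
  · exact ⟨x, rfl⟩

end TwoLevel

section LineMetric

open Finset

/-- The distance from `c` to the next larger element of `V`, or `0` if there is none. -/
noncomputable def succGap (V : Finset ℝ) (c : ℝ) : ℝ :=
  if h : (V.filter (c < ·)).Nonempty then (V.filter (c < ·)).min' h - c else 0

theorem succGap_nonneg (V : Finset ℝ) (c : ℝ) : 0 ≤ succGap V c := by
  rw [succGap]
  split_ifs with h
  · linarith [(mem_filter.mp ((V.filter (c < ·)).min'_mem h)).2]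
  · rfl

theorem succGap_insert_of_lt {V : Finset ℝ} {m c : ℝ} (hc : m < c) :
    succGap (insert m V) c = succGap V c := by
  rw [succGap, succGap, filter_insert, if_neg hc.not_gt]

theorem succGap_insert_of_forall_lt {V : Finset ℝ} {m : ℝ} (hV : V.Nonempty)
    (hm : ∀ c ∈ V, m < c) : succGap (insert m V) m = V.min' hV - m := by
  have hfilter : (insert m V).filter (m < ·) = V := by
    rw [filter_insert, if_neg (lt_irrefl m), filter_true_of_mem hm]
  simp only [succGap, hfilter, dif_pos hV]

theorem sum_succGap_of_le (V : Finset ℝ) {x y : ℝ} (hx : x ∈ V) (hy : y ∈ V) (hxy : x ≤ y) :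
    ∑ c ∈ V with x ≤ c ∧ c < y, succGap V c = y - x := by
  induction V using Finset.induction_on_min generalizing x y with
  | empty => simp at hx
  | insert m V hm ih =>
    have hgap (p : ℝ → Prop) [DecidablePred p] :
        ∑ c ∈ V with p c, succGap (insert m V) c = ∑ c ∈ V with p c, succGap V c :=
      sum_congr rfl fun c hc => succGap_insert_of_lt (hm c (mem_filter.mp hc).1)
    rw [filter_insert]
    rcases mem_insert.mp hx with rfl | hxV
    · rcases mem_insert.mp hy with rfl | hyV
      · rw [if_neg (by simp), filter_false_of_mem fun c hc h => (hm c hc).not_ge h.2.le,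
          sum_empty, sub_self]
      have hV : V.Nonempty := ⟨y, hyV⟩
      have hfilter :
          V.filter (fun c => x ≤ c ∧ c < y) = V.filter (fun c => V.min' hV ≤ c ∧ c < y) :=
        filter_congr fun c hc => by simp [(hm c hc).le, V.min'_le c hc]
      rw [if_pos ⟨le_rfl, hm y hyV⟩, sum_insert fun h => (hm x (mem_filter.mp h).1).false,
        succGap_insert_of_forall_lt hV hm, hgap, hfilter, ih (V.min'_mem hV) hyV (V.min'_le y hyV)]
      ring
    · rcases mem_insert.mp hy with rfl | hyV
      · exact absurd hxy (hm x hxV).not_ge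
      rw [if_neg fun h => (hm x hxV).not_ge h.1, hgap, ih hxV hyV hxy]

end LineMetric

section CutCone

open Finset

variable {M : Type}

noncomputable def cutDist (S : Finset M) (u v : M) : ℝ := if (u ∈ S ↔ v ∈ S) then 0 else 1

theorem cutDist_le_one (S : Finset M) (u v : M) : cutDist S u v ≤ 1 := by
  unfold cutDist
  split_ifs <;> norm_num

variable (M) in
def cutCone : PointedCone ℝ (M → M → ℝ) := PointedCone.hull ℝ (Set.range cutDist)

theorem cutDist_mem_cutCone (S : Finset M) : cutDist S ∈ cutCone M :=
  PointedCone.subset_hull ⟨S, rfl⟩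

theorem abs_sub_eq_sum_succGap_mul_cutDist [Fintype M] (f : M → ℝ) (u v : M) :
    |f u - f v| = ∑ c ∈ univ.image f,
      succGap (univ.image f) c * cutDist (univ.filter (f · ≤ c)) u v := by
  wlog huv : f u ≤ f v generalizing u v
  · simpa [abs_sub_comm, cutDist, iff_comm] using this v u (le_of_not_ge huv)
  rw [abs_sub_comm, abs_of_nonneg (sub_nonneg.mpr huv),
    ← sum_succGap_of_le _ (mem_image_of_mem f (mem_univ u)) (mem_image_of_mem f (mem_univ v)) huv,
    sum_filter]
  refine sum_congr rfl fun c _ => ?_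
  by_cases h : f u ≤ c ∧ c < f v
  · simp [cutDist, h.1, h.2]
  · have : f u ≤ c ↔ f v ≤ c := ⟨fun hu => not_lt.mp (h ⟨hu, ·⟩), huv.trans⟩
    simp [cutDist, this]

theorem abs_sub_mem_cutCone [Fintype M] (f : M → ℝ) : (fun u v => |f u - f v|) ∈ cutCone M := by
  have : (fun u v => |f u - f v|) = ∑ c ∈ univ.image f,
      succGap (univ.image f) c • cutDist (univ.filter (f · ≤ c)) := by
    ext u v
    simp [abs_sub_eq_sum_succGap_mul_cutDist f u v]
  rw [this]
  exact Submodule.sum_mem _ fun c _ =>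
    (cutCone M).smul_mem (succGap_nonneg _ c) (cutDist_mem_cutCone _)

theorem exists_sum_cutDist_eq [Fintype M] {ρ : M → M → ℝ} (hρ : ρ ∈ cutCone M) :
    ∃ μ : Finset M → ℝ, (∀ S, 0 ≤ μ S) ∧ ∀ u v, ρ u v = ∑ S, μ S * cutDist S u v := by
  obtain ⟨μ, hμ⟩ := (Submodule.mem_span_range_iff_exists_fun _).mp hρ
  refine ⟨fun S => μ S, fun S => (μ S).2, fun u v => ?_⟩
  simp only [← hμ, Finset.sum_apply, Pi.smul_apply]
  rfl

end CutCone

section Bernoulli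

open Finset

variable {M : Type} [Fintype M]

noncomputable def bernoulliWeight (p : ℝ) (A : Finset M) : ℝ := p ^ #A * (1 - p) ^ #Aᶜ

theorem bernoulliWeight_nonneg {p : ℝ} (hp0 : 0 ≤ p) (hp1 : p ≤ 1) (A : Finset M) :
    0 ≤ bernoulliWeight p A :=
  mul_nonneg (pow_nonneg hp0 _) (pow_nonneg (sub_nonneg.mpr hp1) _)

theorem sum_bernoulliWeight_disjoint (p : ℝ) (T : Finset M) :
    ∑ A with Disjoint A T, bernoulliWeight p A = (1 - p) ^ #T := by
  have h := prod_add (fun x => if x ∉ T then p else 0) (fun _ => 1 - p) univ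
  simp only [prod_ite_zero, prod_const, ← disjoint_left, ← compl_eq_univ_sdiff,
    powerset_univ, ite_mul, zero_mul, ← sum_filter] at h
  simp only [bernoulliWeight]
  rw [← h, ← prod_const, ← univ_inter T, ← prod_ite_mem]
  refine prod_congr rfl fun x _ => ?_
  by_cases hx : x ∈ T <;> simp [hx]

theorem sum_bernoulliWeight (p : ℝ) : ∑ A : Finset M, bernoulliWeight p A = 1 := by
  simpa using sum_bernoulliWeight_disjoint p (∅ : Finset M)

theorem sum_bernoulliWeight_hit_miss (p : ℝ) {S S' : Finset M} (h : Disjoint S S') :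
    ∑ A with ¬Disjoint A S ∧ Disjoint A S', bernoulliWeight p A =
      (1 - p) ^ #S' * (1 - (1 - p) ^ #S) := by
  have hsplit := sum_filter_add_sum_filter_not (univ.filter (Disjoint · S')) (Disjoint · S)
    (bernoulliWeight p)
  have hmiss : ∑ A with Disjoint A S' ∧ Disjoint A S, bernoulliWeight p A =
      (1 - p) ^ (#S + #S') := by
    rw [← card_union_of_disjoint h, ← sum_bernoulliWeight_disjoint]
    simp_rw [disjoint_union_right, and_comm]
  rw [filter_filter, filter_filter, sum_bernoulliWeight_disjoint, hmiss] at hsplit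
  simp_rw [and_comm (a := ¬Disjoint _ S)]
  rw [pow_add] at hsplit
  linarith

end Bernoulli

section ExpBounds

open Finset Real

theorem exp_neg_one_le_one_sub_pow {p : ℝ} (hp1 : p < 1) {k : ℕ}
    (hk : k * p ≤ 1 - p) : exp (-1) ≤ (1 - p) ^ k := by
  have h1p : 0 < 1 - p := by linarith
  have hlog : -(p / (1 - p)) ≤ log (1 - p) := by
    have := one_sub_inv_le_log_of_pos h1p
    rwa [show 1 - (1 - p)⁻¹ = -(p / (1 - p)) by field_simp; ring] at this
  have hkp : k * (p / (1 - p)) ≤ 1 := by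
    rwa [mul_div_assoc', div_le_one h1p]
  calc exp (-1) ≤ exp (k * log (1 - p)) := by
        gcongr
        nlinarith [mul_le_mul_of_nonneg_left hlog k.cast_nonneg]
    _ = (1 - p) ^ k := by rw [exp_nat_mul, exp_log h1p]

theorem one_sub_pow_le_exp_neg_mul {p : ℝ} (hp1 : p ≤ 1) (m : ℕ) :
    (1 - p) ^ m ≤ exp (-(m * p)) :=
  calc (1 - p) ^ m ≤ exp (-p) ^ m :=
        pow_le_pow_left₀ (sub_nonneg.mpr hp1) (one_sub_le_exp_neg p) m
    _ = exp (-(m * p)) := by rw [← exp_nat_mul, mul_neg]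

theorem one_div_twelve_le_miss_mul_hit {p : ℝ} (hp1 : p < 1) {k m : ℕ}
    (hk : k * p ≤ 1 - p) (hm : 1 / 2 ≤ m * p) :
    1 / 12 ≤ (1 - p) ^ k * (1 - (1 - p) ^ m) := by
  have hmiss : 1 / 4 ≤ (1 - p) ^ k := by
    refine le_trans ?_ (exp_neg_one_le_one_sub_pow hp1 hk)
    rw [exp_neg, one_div]
    exact inv_anti₀ (exp_pos 1) (exp_one_lt_d9.le.trans (by norm_num))
  have hhit : (1 - p) ^ m ≤ 2 / 3 := by
    refine (one_sub_pow_le_exp_neg_mul hp1.le m).trans ?_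
    calc exp (-(m * p)) ≤ exp (-(1 / 2)) := exp_le_exp.mpr (by linarith)
      _ ≤ 2 / 3 := by
        rw [exp_neg, show (2 / 3 : ℝ) = (3 / 2)⁻¹ by norm_num]
        exact inv_anti₀ (by norm_num) (by linarith [add_one_le_exp (1 / 2 : ℝ)])
  nlinarith

theorem one_div_twelve_le_sum_hit_miss {M : Type} [Fintype M] {t : ℕ} {S S' : Finset M}
    (hdisj : Disjoint S S') (hS : 2 ^ t ≤ #S) (hS' : #S' < 2 ^ (t + 1)) :
    1 / 12 ≤ ∑ A with ¬Disjoint A S ∧ Disjoint A S', bernoulliWeight ((2 : ℝ)⁻¹ ^ (t + 1)) A := by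
  set p : ℝ := 2⁻¹ ^ (t + 1)
  have hp : (2 : ℝ) ^ t * 2 * p = 1 := by rw [← pow_succ, ← mul_pow]; norm_num
  have hp0 : 0 ≤ p := by positivity
  have hp1 : p < 1 := pow_lt_one₀ (by norm_num) (by norm_num) (by omega)
  rw [sum_bernoulliWeight_hit_miss _ hdisj]
  refine one_div_twelve_le_miss_mul_hit hp1 ?_ ?_
  · have : ((#S' : ℝ) + 1) * p ≤ 2 ^ t * 2 * p :=
      mul_le_mul_of_nonneg_right (by exact_mod_cast hS') hp0
    linarith
  · have : (2 : ℝ) ^ t * p ≤ #S * p := mul_le_mul_of_nonneg_right (by exact_mod_cast hS) hp0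
    linarith

end ExpBounds

section Bourgain

open Finset Metric

variable {M : Type} [MetricSpace M] [Fintype M]

noncomputable def expectedInfDistDiff (p : ℝ) (u v : M) : ℝ :=
  ∑ A : Finset M, bernoulliWeight p A * |infDist u (A : Set M) - infDist v (A : Set M)|

theorem expectedInfDistDiff_comm (p : ℝ) (u v : M) :
    expectedInfDistDiff p u v = expectedInfDistDiff p v u := by
  simp only [expectedInfDistDiff, abs_sub_comm]

theorem expectedInfDistDiff_nonneg {p : ℝ} (hp0 : 0 ≤ p) (hp1 : p ≤ 1) (u v : M) :
    0 ≤ expectedInfDistDiff p u v :=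
  sum_nonneg fun A _ => mul_nonneg (bernoulliWeight_nonneg hp0 hp1 A) (abs_nonneg _)

theorem expectedInfDistDiff_le {p : ℝ} (hp0 : 0 ≤ p) (hp1 : p ≤ 1) (u v : M) :
    expectedInfDistDiff p u v ≤ dist u v :=
  calc expectedInfDistDiff p u v ≤ ∑ A : Finset M, bernoulliWeight p A * dist u v := by
        refine sum_le_sum fun A _ => mul_le_mul_of_nonneg_left ?_ (bernoulliWeight_nonneg hp0 hp1 A)
        have h := (lipschitz_infDist_pt (A : Set M)).dist_le_mul u v
        rwa [Real.dist_eq, NNReal.coe_one, one_mul] at h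
    _ = dist u v := by rw [← sum_mul, sum_bernoulliWeight, one_mul]

theorem expectedInfDistDiff_mem_cutCone {p : ℝ} (hp0 : 0 ≤ p) (hp1 : p ≤ 1) :
    expectedInfDistDiff (M := M) p ∈ cutCone M := by
  have : expectedInfDistDiff (M := M) p =
      ∑ A : Finset M, bernoulliWeight p A • fun u v => |infDist u (A : Set M) - infDist v A| := by
    ext u v
    simp [expectedInfDistDiff]
  rw [this]
  exact Submodule.sum_mem _ fun A _ =>
    (cutCone M).smul_mem (bernoulliWeight_nonneg hp0 hp1 A) (abs_sub_mem_cutCone _)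

/-- On the event that `A` meets `S` and misses `S'`, `infDist w A ≤ r₁` and `r₂ ≤ infDist w' A`. -/
theorem sum_hit_miss_mul_le_expectedInfDistDiff {p : ℝ} (hp0 : 0 ≤ p) (hp1 : p ≤ 1)
    {S S' : Finset M} {w w' : M} {r₁ r₂ : ℝ} (hS : ∀ a ∈ S, dist w a ≤ r₁)
    (hS' : ∀ a ∉ S', r₂ ≤ dist w' a) :
    (∑ A with ¬Disjoint A S ∧ Disjoint A S', bernoulliWeight p A) * (r₂ - r₁) ≤
      expectedInfDistDiff p w w' := by
  rw [sum_mul, sum_filter]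
  refine sum_le_sum fun A _ => ?_
  split_ifs with hA
  · obtain ⟨⟨a, haA, haS⟩, hAS'⟩ := (not_disjoint_iff.mp hA.1), hA.2
    have h₁ : infDist w A ≤ r₁ := (infDist_le_dist_of_mem (mem_coe.mpr haA)).trans (hS a haS)
    have h₂ : r₂ ≤ infDist w' A := (le_infDist ⟨a, haA⟩).mpr fun y hy =>
      hS' y fun hyS' => disjoint_left.mp hAS' hy hyS'
    refine mul_le_mul_of_nonneg_left ?_ (bernoulliWeight_nonneg hp0 hp1 A)
    rw [abs_sub_comm]
    exact (le_abs_self _).trans' (by linarith)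
  · exact mul_nonneg (bernoulliWeight_nonneg hp0 hp1 A) (abs_nonneg _)

variable (M) in
noncomputable def distValues : Finset ℝ := univ.image fun x : M × M => dist x.1 x.2

theorem dist_mem_distValues (x y : M) : dist x y ∈ distValues M :=
  mem_image_of_mem _ (mem_univ (x, y))

/-- Bourgain's radius `r_t(u, v)`: the least distance value at which the closed balls around `u`
and `v` both hold `2 ^ t` points, capped at `dist u v / 4`. -/
noncomputable def bourgainRadius (u v : M) (t : ℕ) : ℝ :=
  (insert (dist u v / 4) ((distValues M).filter fun r =>
    2 ^ t ≤ #{x | dist u x ≤ r} ∧ 2 ^ t ≤ #{x | dist v x ≤ r})).min' (insert_nonempty _ _)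

variable {u v : M} {t : ℕ}

theorem bourgainRadius_le_quarter_dist : bourgainRadius u v t ≤ dist u v / 4 :=
  min'_le _ _ (mem_insert_self _ _)

theorem bourgainRadius_le {r : ℝ} (hr : r ∈ distValues M) (hu : 2 ^ t ≤ #{x | dist u x ≤ r})
    (hv : 2 ^ t ≤ #{x | dist v x ≤ r}) : bourgainRadius u v t ≤ r :=
  min'_le _ _ (mem_insert_of_mem (mem_filter.mpr ⟨hr, hu, hv⟩))

theorem bourgainRadius_nonneg : 0 ≤ bourgainRadius u v t := by
  refine le_min' _ _ _ fun r hr => ?_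
  rcases mem_insert.mp hr with rfl | hr
  · positivity
  · obtain ⟨x, -, rfl⟩ := mem_image.mp (mem_filter.mp hr).1
    exact dist_nonneg

theorem card_closedBall_of_bourgainRadius_lt (h : bourgainRadius u v t < dist u v / 4) :
    2 ^ t ≤ #{x | dist u x ≤ bourgainRadius u v t} ∧
      2 ^ t ≤ #{x | dist v x ≤ bourgainRadius u v t} := by
  rcases mem_insert.mp (min'_mem _ _ : bourgainRadius u v t ∈ _) with h' | h'
  · exact absurd h' h.ne
  · exact (mem_filter.mp h').2

theorem bourgainRadius_zero : bourgainRadius u v 0 = 0 :=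
  le_antisymm (bourgainRadius_le (dist_self u ▸ dist_mem_distValues u u)
    (card_pos.mpr ⟨u, by simp⟩) (card_pos.mpr ⟨v, by simp⟩)) bourgainRadius_nonneg

/-- Two balls of radius `< dist u v / 4` are disjoint, so they cannot both hold `2 ^ q ≥ |M|`
points. -/
theorem bourgainRadius_of_card_le {q : ℕ} (hq : Fintype.card M ≤ 2 ^ q) :
    bourgainRadius u v q = dist u v / 4 := by
  refine bourgainRadius_le_quarter_dist.antisymm (not_lt.mp fun h => ?_)
  obtain ⟨hu, hv⟩ := card_closedBall_of_bourgainRadius_lt h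
  have hdisj : Disjoint ({x | dist u x ≤ bourgainRadius u v q} : Finset M)
      ({x | dist v x ≤ bourgainRadius u v q} : Finset M) := by
    refine disjoint_left.mpr fun x hxu hxv => ?_
    simp only [mem_filter, mem_univ, true_and] at hxu hxv
    linarith [dist_triangle_right u v x, dist_nonneg (x := u) (y := v)]
  have := card_union_of_disjoint hdisj ▸ card_le_univ (_ ∪ _)
  have : 0 < 2 ^ q := by positivity
  omega

theorem bourgainRadius_comm (u v : M) (t : ℕ) : bourgainRadius u v t = bourgainRadius v u t := by
  simp only [bourgainRadius, dist_comm u v, and_comm]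

/-- Otherwise the largest distance below `r_t` realised inside these open balls would already
qualify, contradicting minimality. -/
theorem card_ball_bourgainRadius_lt :
    #{x | dist u x < bourgainRadius u v t} < 2 ^ t ∨
      #{x | dist v x < bourgainRadius u v t} < 2 ^ t := by
  set R := bourgainRadius u v t
  by_contra! h
  obtain ⟨hu, hv⟩ := h
  set D := ({x | dist u x < R} : Finset M).image (dist u) ∪
    ({x | dist v x < R} : Finset M).image (dist v)
  have hne : D.Nonempty :=
    ((card_pos.mp ((Nat.two_pow_pos t).trans_le hu)).image _).mono subset_union_left
  have hD : ∀ s ∈ D, s ∈ distValues M ∧ s < R := by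
    intro s hs
    rcases mem_union.mp hs with hs | hs <;> obtain ⟨x, hx, rfl⟩ := mem_image.mp hs <;>
      exact ⟨dist_mem_distValues _ x, (mem_filter.mp hx).2⟩
  have hR : R ≤ D.max' hne := by
    refine bourgainRadius_le (hD _ (D.max'_mem hne)).1 (hu.trans (card_le_card fun x hx => ?_))
      (hv.trans (card_le_card fun x hx => ?_)) <;>
    simp only [mem_filter, mem_univ, true_and] at hx ⊢
    · exact D.le_max' _ (mem_union_left _ (mem_image_of_mem _ (by simpa using hx)))
    · exact D.le_max' _ (mem_union_right _ (mem_image_of_mem _ (by simpa using hx)))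
  exact (hD _ (D.max'_mem hne)).2.not_ge hR

theorem bourgainRadius_succ_sub_le (t : ℕ) :
    (bourgainRadius u v (t + 1) - bourgainRadius u v t) / 12 ≤
      expectedInfDistDiff ((2 : ℝ)⁻¹ ^ (t + 1)) u v := by
  set p : ℝ := 2⁻¹ ^ (t + 1)
  have hp0 : 0 ≤ p := by positivity
  have hp1 : p < 1 := pow_lt_one₀ (by norm_num) (by norm_num) t.succ_ne_zero
  rcases le_or_gt (bourgainRadius u v (t + 1)) (bourgainRadius u v t) with hle | hlt
  · linarith [expectedInfDistDiff_nonneg hp0 hp1.le u v]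
  wlog hv : #{x | dist v x < bourgainRadius u v (t + 1)} < 2 ^ (t + 1) generalizing u v
  · have hlt' : bourgainRadius v u t < bourgainRadius v u (t + 1) := by
      rwa [bourgainRadius_comm v u t, bourgainRadius_comm v u (t + 1)]
    have hu : #{x | dist u x < bourgainRadius v u (t + 1)} < 2 ^ (t + 1) := by
      rw [bourgainRadius_comm v u]
      exact card_ball_bourgainRadius_lt.resolve_right hv
    rw [bourgainRadius_comm u v, bourgainRadius_comm u v, expectedInfDistDiff_comm]
    exact this hlt' hu
  set S : Finset M := {x | dist u x ≤ bourgainRadius u v t}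
  set S' : Finset M := {x | dist v x < bourgainRadius u v (t + 1)}
  have hS : 2 ^ t ≤ #S :=
    (card_closedBall_of_bourgainRadius_lt (hlt.trans_le bourgainRadius_le_quarter_dist)).1
  have hdisj : Disjoint S S' := by
    refine disjoint_left.mpr fun x hxS hxS' => ?_
    simp only [S, S', mem_filter, mem_univ, true_and] at hxS hxS'
    linarith [dist_triangle u x v, dist_comm x v, dist_nonneg (x := u) (y := v),
      @bourgainRadius_le_quarter_dist _ _ _ u v t,
      @bourgainRadius_le_quarter_dist _ _ _ u v (t + 1)]
  have hprob : 1 / 12 ≤ ∑ A with ¬Disjoint A S ∧ Disjoint A S', bernoulliWeight p A :=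
    one_div_twelve_le_sum_hit_miss hdisj hS hv
  have hsep := sum_hit_miss_mul_le_expectedInfDistDiff hp0 hp1.le (S := S) (S' := S')
    (w := u) (w' := v) (r₁ := bourgainRadius u v t) (r₂ := bourgainRadius u v (t + 1))
    (fun a ha => (mem_filter.mp ha).2) (fun a ha => not_lt.mp fun h => ha (by simp [S', h]))
  nlinarith [mul_le_mul_of_nonneg_right hprob (sub_nonneg.mpr hlt.le)]

noncomputable def bourgainDist (q : ℕ) (u v : M) : ℝ :=
  ∑ t ∈ range q, expectedInfDistDiff ((2 : ℝ)⁻¹ ^ (t + 1)) u v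

theorem bourgainDist_le (q : ℕ) (u v : M) : bourgainDist q u v ≤ q * dist u v := by
  calc bourgainDist q u v ≤ ∑ _t ∈ range q, dist u v :=
        sum_le_sum fun t _ => expectedInfDistDiff_le (by positivity) (pow_le_one₀ (by norm_num)
          (by norm_num)) u v
    _ = q * dist u v := by rw [sum_const, card_range, nsmul_eq_mul]

theorem dist_le_bourgainDist {q : ℕ} (hq : Fintype.card M ≤ 2 ^ q) (u v : M) :
    dist u v ≤ 48 * bourgainDist q u v := by
  have htelescope : ∑ t ∈ range q, (bourgainRadius u v (t + 1) - bourgainRadius u v t) / 12 =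
      dist u v / 48 := by
    rw [← sum_div, sum_range_sub (bourgainRadius u v), bourgainRadius_of_card_le hq,
      bourgainRadius_zero]
    ring
  have hscales := sum_le_sum fun t (_ : t ∈ range q) =>
    bourgainRadius_succ_sub_le (u := u) (v := v) t
  rw [htelescope] at hscales
  rw [bourgainDist]
  linarith

theorem bourgainDist_mem_cutCone (q : ℕ) : bourgainDist (M := M) q ∈ cutCone M := by
  have : bourgainDist (M := M) q = ∑ t ∈ range q, expectedInfDistDiff ((2 : ℝ)⁻¹ ^ (t + 1)) := by
    ext u v
    simp [bourgainDist]
  rw [this]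
  exact Submodule.sum_mem _ fun t _ =>
    expectedInfDistDiff_mem_cutCone (by positivity) (pow_le_one₀ (by norm_num) (by norm_num))

theorem exists_sum_cutDist_between {q : ℕ} (hq : Fintype.card M ≤ 2 ^ q) :
    ∃ μ : Finset M → ℝ, (∀ S, 0 ≤ μ S) ∧ ∀ u v : M,
      dist u v ≤ ∑ S, μ S * cutDist S u v ∧ ∑ S, μ S * cutDist S u v ≤ 48 * q * dist u v := by
  obtain ⟨μ, hμ, hsum⟩ := exists_sum_cutDist_eq
    ((cutCone M).smul_mem (by norm_num : (0 : ℝ) ≤ 48) (bourgainDist_mem_cutCone q))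
  refine ⟨μ, hμ, fun u v => ?_⟩
  rw [← hsum, Pi.smul_apply, Pi.smul_apply, smul_eq_mul, mul_assoc]
  exact ⟨dist_le_bourgainDist hq u v,
    mul_le_mul_of_nonneg_left (bourgainDist_le q u v) (by norm_num)⟩

end Bourgain

section CutTrees

open Finset

theorem exists_pos_le_dist (M : Type) [MetricSpace M] [Fintype M] :
    ∃ δ > 0, ∀ u v : M, u ≠ v → δ ≤ dist u v := by
  set D := insert 1 ((univ.offDiag : Finset (M × M)).image fun x => dist x.1 x.2)
  refine ⟨D.min' (insert_nonempty _ _), (lt_min'_iff _ _).mpr fun r hr => ?_,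
    fun u v huv => min'_le _ _ (mem_insert_of_mem (mem_image.mpr ⟨(u, v), by simpa, rfl⟩))⟩
  rcases mem_insert.mp hr with rfl | hr
  · exact one_pos
  · obtain ⟨x, hx, rfl⟩ := mem_image.mp hr
    exact dist_pos.mpr (mem_offDiag.mp hx).2.2

variable {M : Type} [Fintype M]

theorem cutDist_eq_zero_of_trivial {S : Finset M} (hS : ¬(S.Nonempty ∧ S ≠ univ)) (u v : M) :
    cutDist S u v = 0 := by
  rcases not_and_or.mp hS with h | h
  · simp [cutDist, not_nonempty_iff_eq_empty.mp h]
  · simp [cutDist, not_not.mp h]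

theorem twoLevelTree_treeDist_inr_decide_mem (S : Finset M) {a b : ℝ} (ha : 0 ≤ a) (hb : 0 ≤ b)
    (u v : M) :
    treeDist (twoLevelTree fun x => decide (x ∈ S)) (twoLevelLen _ a b) (.inr u) (.inr v) =
      2 * a * cutDist S u v + if u = v then 0 else 2 * b := by
  rw [twoLevelTree_treeDist_inr ha hb, cutDist, decide_eq_decide]
  split_ifs <;> ring

theorem surjective_decide_mem {S : Finset M} (hS : S.Nonempty ∧ S ≠ univ) :
    Surjective fun x => decide (x ∈ S) := by
  intro b
  cases b
  · obtain ⟨x, hx⟩ := not_forall.mp fun h => hS.2 (eq_univ_iff_forall.mpr h)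
    exact ⟨x, by simpa using hx⟩
  · obtain ⟨x, hx⟩ := hS.1
    exact ⟨x, by simpa using hx⟩

theorem exists_twoLevelTree_average [MetricSpace M] [Nontrivial M] {K : ℝ} {μ : Finset M → ℝ}
    (hμ : ∀ S, 0 ≤ μ S)
    (hμd : ∀ u v, dist u v ≤ ∑ S, μ S * cutDist S u v ∧ ∑ S, μ S * cutDist S u v ≤ K * dist u v) :
    ∃ (N : ℕ) (T : Fin N → FinRootedTree)
      (len : (i : Fin N) → (T i).V → ℝ)
      (emb : (i : Fin N) → M → (T i).V)
      (lam : Fin N → ℝ),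
      (∀ i, IsHSTLen (T i) (len i)) ∧
      (∀ i v, IsLeaf (T i) v → (T i).depth v = 2) ∧
      (∀ i, Injective (emb i)) ∧
      (∀ i x, IsLeaf (T i) (emb i x)) ∧
      (∀ i v, IsLeaf (T i) v → ∃ x : M, emb i x = v) ∧
      (∀ i, 0 ≤ lam i) ∧ (∑ i, lam i = 1) ∧
      (∀ u v : M,
        dist u v ≤ (∑ i, lam i * treeDist (T i) (len i) (emb i u) (emb i v)) ∧
        (∑ i, lam i * treeDist (T i) (len i) (emb i u) (emb i v)) ≤ (K + 1) * dist u v) := by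
  -- A trivial cut contributes nothing, and its tree would have a leaf that is not a point of `M`.
  let ι := {S : Finset M // S.Nonempty ∧ S ≠ univ}
  have hcut : ∀ u v, ∑ S, μ S * cutDist S u v = ∑ S : ι, μ S * cutDist S u v := fun u v => by
    rw [← sum_filter_of_ne (p := fun S => S.Nonempty ∧ S ≠ univ) fun S _ h =>
      not_not.mp fun hS => h (by rw [cutDist_eq_zero_of_trivial hS, mul_zero])]
    exact sum_subtype _ (by simp) _
  set W := ∑ S : ι, μ S
  have hW : 0 < W := by
    obtain ⟨u, v, huv⟩ := exists_pair_ne M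
    calc 0 < dist u v := dist_pos.mpr huv
      _ ≤ ∑ S : ι, μ S * cutDist S u v := hcut u v ▸ (hμd u v).1
      _ ≤ W := sum_le_sum fun S _ => mul_le_of_le_one_right (hμ S) (cutDist_le_one S u v)
  obtain ⟨δ, hδ, hδd⟩ := exists_pos_le_dist M
  -- Leaf edges of length `ε` add `2ε ≤ δ ≤ dist u v` to the distance of distinct points.
  set ε := min (W / 4) (δ / 2)
  have hε : 0 < ε := lt_min (by positivity) (by positivity)
  have hexp : ∀ u v, ∑ S : ι, μ S / W * treeDist (twoLevelTree fun x => decide (x ∈ S.1))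
      (twoLevelLen _ (W / 2) ε) (.inr u) (.inr v) =
        ∑ S, μ S * cutDist S u v + if u = v then 0 else 2 * ε := by
    intro u v
    simp_rw [twoLevelTree_treeDist_inr_decide_mem _ (by positivity : 0 ≤ W / 2) hε.le, hcut,
      mul_add, sum_add_distrib, ← sum_mul, ← sum_div]
    rw [show (∑ S : ι, μ S) / W = 1 from div_self hW.ne', one_mul]
    congr 1
    exact sum_congr rfl fun S _ => by field_simp
  have hεW : ε ≤ W / 2 / 2 := by linarith [min_le_left (W / 4) (δ / 2)]
  let e := (Fintype.equivFin ι).symm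
  refine ⟨Fintype.card ι, fun i => twoLevelTree fun x => decide (x ∈ (e i).1),
    fun i => twoLevelLen _ (W / 2) ε, fun _ => .inr, fun i => μ (e i) / W,
    fun i => twoLevelTree_isHSTLen hε hεW, fun i v hv => ?_, fun _ => Sum.inr_injective,
    fun _ => twoLevelTree_isLeaf_inr,
    fun i v hv => twoLevelTree_exists_inr_of_isLeaf (surjective_decide_mem (e i).2) hv,
    fun i => div_nonneg (hμ _) hW.le, ?_, fun u v => ?_⟩
  · obtain ⟨x, rfl⟩ := twoLevelTree_exists_inr_of_isLeaf (surjective_decide_mem (e i).2) hv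
    rfl
  · rw [e.sum_comp (fun S => μ S / W), ← sum_div, div_self hW.ne']
  · rw [e.sum_comp (fun S => μ S / W * treeDist (twoLevelTree fun x => decide (x ∈ S.1))
      (twoLevelLen _ (W / 2) ε) (.inr u) (.inr v)), hexp]
    split_ifs with huv
    · subst huv
      simpa using hμd u u
    · obtain ⟨hlow, hup⟩ := hμd u v
      have : 2 * ε ≤ dist u v := by linarith [min_le_right (W / 4) (δ / 2), hδd u v huv]
      constructor <;> linarith

end CutTrees

theorem natLog_add_one_mul_log_two_le {n : ℕ} (hn : 2 ≤ n) :
    ((Nat.log 2 n : ℝ) + 1) * Real.log 2 ≤ 2 * Real.log n := by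
  have hpow : (Nat.log 2 n : ℝ) * Real.log 2 ≤ Real.log n := by
    rw [← Real.log_pow]
    exact Real.log_le_log (by positivity) (by exact_mod_cast Nat.pow_log_le_self 2 (by omega))
  have htwo : Real.log 2 ≤ Real.log n := Real.log_le_log (by norm_num) (by exact_mod_cast hn)
  linarith

/-- There is a universal constant `C` such that every metric
space on `n ≥ 2` points embeds into a finitely supported distribution over
HSTs of depth at most `C·log n`, each having the `n` points as its leaf set,
with expected distortion at most `C·log n`. -/
theorem hst_embedding :
    ∃ C : ℝ, 0 < C ∧
      ∀ (M : Type) [MetricSpace M] [Fintype M] (n : ℕ), 2 ≤ n → Fintype.card M = n →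
        ∃ (N : ℕ) (T : Fin N → FinRootedTree)
          (len : (i : Fin N) → (T i).V → ℝ)
          (emb : (i : Fin N) → M → (T i).V)
          (lam : Fin N → ℝ),
          (∀ i, IsHSTLen (T i) (len i)) ∧
          (∀ i v, IsLeaf (T i) v → ((T i).depth v : ℝ) ≤ C * Real.log n) ∧
          (∀ i, Function.Injective (emb i)) ∧
          (∀ i x, IsLeaf (T i) (emb i x)) ∧
          (∀ i v, IsLeaf (T i) v → ∃ x : M, emb i x = v) ∧
          (∀ i, 0 ≤ lam i) ∧ (∑ i, lam i = 1) ∧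
          (∀ u v : M,
            dist u v ≤ (∑ i, lam i * treeDist (T i) (len i) (emb i u) (emb i v)) ∧
            (∑ i, lam i * treeDist (T i) (len i) (emb i u) (emb i v)) ≤
              C * Real.log n * dist u v) := by
  refine ⟨150, by norm_num, fun M _ _ n hn hcard => ?_⟩
  have : Nontrivial M := Fintype.one_lt_card_iff_nontrivial.mp (by omega)
  obtain ⟨μ, hμ, hμd⟩ := exists_sum_cutDist_between (M := M) (q := Nat.log 2 n + 1)
    (hcard ▸ (Nat.lt_pow_succ_log_self one_lt_two n).le)
  obtain ⟨N, T, len, emb, lam, hHST, hdepth, hinj, hleaf, hsurj, hlam, hsum, hdist⟩ :=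
    exists_twoLevelTree_average hμ hμd
  have hlog := natLog_add_one_mul_log_two_le hn
  have hlog2 := Real.log_two_gt_d9
  have hK : 48 * ((Nat.log 2 n + 1 : ℕ) : ℝ) + 1 ≤ 150 * Real.log n := by
    have : Real.log 2 ≤ Real.log n := Real.log_le_log (by norm_num) (by exact_mod_cast hn)
    push_cast
    nlinarith
  refine ⟨N, T, len, emb, lam, hHST, fun i v hv => ?_, hinj, hleaf, hsurj, hlam, hsum,
    fun u v => ⟨(hdist u v).1, (hdist u v).2.trans (by gcongr)⟩⟩
  rw [hdepth i v hv]
  push_cast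
  nlinarith
end

section
/- Consider the following OSD instance. The metric space is the star with center c and points p_0, p_1, …, p_{n−1} (n ≥ 2), where d(p_0,c) = W for some W ≥ 1, d(p_i,c) = 1 for 1 ≤ i ≤ n−1, and distances between points are sums along the star. The server starts at p_0. For each 1 ≤ i ≤ n−1 there is a request at p_i arriving at time 0 with penalty function f(t) = (W+1)^{i+1}·t; in addition, p_0 receives a request arriving at time 0 and a request arriving at each time (W+1)^{−i} for i = 0,1,…,n−2, each with penalty function f(t) = L·t, where L ≥ 0 is an arbitrary parameter. Then, for every value of L, this instance admits a schedule of total cost at most 2(n+W): serve the request at p_0 at time 0, immediately (at time 0) tour p_1,…,p_{n−1} and return to p_0, and serve every later request at p_0 at its arrival time. -/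
/-!
Since all distances of the star pass through the centre, a tour that starts and ends at `p 0`
and visits every leaf once costs at most `2W + 2(n - 1)`. Performing it at time `0` serves all
leaf requests on arrival; afterwards the server waits at `p 0` and serves each request there on
arrival at no further movement cost. No request is delayed, so the delay penalties vanish.
-/

/-- A request in the online service with delay (OSD) problem: a point of the
metric space, an arrival time, and a nondecreasing, nonnegative delay penalty
function (given on `ℝ`, extended below `0`; only nonnegative arguments are
ever used). -/
structure OSDRequest (M : Type) where
  point : M
  arrival : ℝ
  arrival_nonneg : 0 ≤ arrival
  penalty : ℝ → ℝ
  penalty_nonneg : ∀ t, 0 ≤ penalty t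
  penalty_mono : Monotone penalty

/-- A schedule is a finite sequence of timestamped moves with nondecreasing,
nonnegative timestamps. -/
def ValidSchedule {M : Type} (S : List (ℝ × M)) : Prop :=
  S.Chain' (fun a b => a.1 ≤ b.1) ∧ ∀ mv ∈ S, 0 ≤ mv.1

/-- A schedule serves a request if some move is at the request's point, at a
time no earlier than its arrival. -/
def ServesReq {M : Type} (S : List (ℝ × M)) (r : OSDRequest M) : Prop :=
  ∃ mv ∈ S, r.arrival ≤ mv.1 ∧ mv.2 = r.point

/-- The service time of a request: the smallest timestamp of a serving move. -/
noncomputable def serveTime {M : Type} (S : List (ℝ × M)) (r : OSDRequest M) : ℝ :=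
  sInf {t : ℝ | ∃ mv ∈ S, mv.1 = t ∧ r.arrival ≤ t ∧ mv.2 = r.point}

/-- Movement cost of a schedule, starting from a given position, w.r.t. a
distance function `d`. -/
noncomputable def moveCost {M : Type} (d : M → M → ℝ) : M → List (ℝ × M) → ℝ
  | _, [] => 0
  | q, mv :: rest => d q mv.2 + moveCost d mv.2 rest

/-- Total cost of a schedule: movement cost plus total delay penalty. -/
noncomputable def schedCost {M : Type} (d : M → M → ℝ) (q0 : M)
    (I : Finset (OSDRequest M)) (S : List (ℝ × M)) : ℝ :=
  moveCost d q0 S + ∑ r ∈ I, r.penalty (serveTime S r - r.arrival)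

/-- A schedule for an instance: valid and serving every request. -/
def IsSchedule {M : Type} (I : Finset (OSDRequest M)) (S : List (ℝ × M)) : Prop :=
  ValidSchedule S ∧ ∀ r ∈ I, ServesReq S r

/-- The optimal (offline) cost of an instance. -/
noncomputable def OPT {M : Type} (d : M → M → ℝ) (q0 : M)
    (I : Finset (OSDRequest M)) : ℝ :=
  sInf {c : ℝ | ∃ S : List (ℝ × M), IsSchedule I S ∧ schedCost d q0 I S = c}

/-- All requests of the instance arrive at allowed points. -/
def OKInst {M : Type} (P : M → Prop) (I : Finset (OSDRequest M)) : Prop :=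
  ∀ r ∈ I, P r.point
/-- The star metric on center `none` and points `some i` (`i : Fin n`), where
`p 0` is at distance `W` from the center and every other point at distance `1`. -/
noncomputable def starVtr (n : ℕ) (W : ℝ) : Option (Fin n) → ℝ
  | none => 0
  | some i => if (i : ℕ) = 0 then W else 1

noncomputable def starDist (n : ℕ) (W : ℝ) (x y : Option (Fin n)) : ℝ :=
  if x = y then 0 else starVtr n W x + starVtr n W y

/-- The instance of Fig. 1: for each `1 ≤ i ≤ n-1`, a request at `p i` arriving
at time `0` with penalty `(W+1)^(i+1)·t`; at `p 0`, a request arriving at time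
`0` and one arriving at each time `(W+1)^(-j)`, `j = 0,…,n-2`, with penalty
rate `L`. -/
def Stmt8Inst (n : ℕ) (W L : ℝ) (r : OSDRequest (Option (Fin n))) : Prop :=
  (∃ i : Fin n, 1 ≤ (i : ℕ) ∧ r.point = some i ∧ r.arrival = 0 ∧
      r.penalty = fun t => (W + 1) ^ ((i : ℕ) + 1) * max t 0) ∨
  ((∃ i0 : Fin n, (i0 : ℕ) = 0 ∧ r.point = some i0) ∧
      r.penalty = (fun t => L * max t 0) ∧
      (r.arrival = 0 ∨ ∃ j : ℕ, j ≤ n - 2 ∧ r.arrival = (W + 1) ^ (-(j : ℤ))))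

section Schedules

variable {M : Type}

theorem serveTime_eq_arrival {S : List (ℝ × M)} {r : OSDRequest M}
    (h : (r.arrival, r.point) ∈ S) : serveTime S r = r.arrival := by
  have hlb : r.arrival ∈ lowerBounds
      {t : ℝ | ∃ mv ∈ S, mv.1 = t ∧ r.arrival ≤ t ∧ mv.2 = r.point} := by
    rintro t ⟨-, -, -, ht, -⟩
    exact ht
  have hmem : r.arrival ∈ {t : ℝ | ∃ mv ∈ S, mv.1 = t ∧ r.arrival ≤ t ∧ mv.2 = r.point} :=
    ⟨_, h, rfl, le_rfl, rfl⟩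
  exact le_antisymm (csInf_le ⟨_, hlb⟩ hmem) (le_csInf ⟨_, hmem⟩ hlb)

theorem isSchedule_of_forall_mem {I : Finset (OSDRequest M)} {S : List (ℝ × M)}
    (hS : ValidSchedule S) (h : ∀ r ∈ I, (r.arrival, r.point) ∈ S) : IsSchedule I S :=
  ⟨hS, fun r hr => ⟨_, h r hr, le_rfl, rfl⟩⟩

theorem schedCost_eq_of_forall_mem (d : M → M → ℝ) (q : M) {I : Finset (OSDRequest M)}
    {S : List (ℝ × M)} (h : ∀ r ∈ I, (r.arrival, r.point) ∈ S) :
    schedCost d q I S = moveCost d q S + ∑ r ∈ I, r.penalty 0 := by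
  unfold schedCost
  congr 1
  refine Finset.sum_congr rfl fun r hr => ?_
  rw [serveTime_eq_arrival (h r hr), sub_self]

theorem validSchedule_of_pairwise {S : List (ℝ × M)}
    (hS : S.Pairwise (fun a b => a.1 ≤ b.1)) (h0 : ∀ mv ∈ S, 0 ≤ mv.1) : ValidSchedule S :=
  ⟨hS.isChain, h0⟩

theorem moveCost_append_cons (d : M → M → ℝ) (mv : ℝ × M) (l rest : List (ℝ × M)) (q : M) :
    moveCost d q (l ++ mv :: rest) = moveCost d q (l ++ [mv]) + moveCost d mv.2 rest := by
  induction l generalizing q with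
  | nil => simp only [List.nil_append, moveCost, add_zero]
  | cons a l ih => simp only [List.cons_append, moveCost, ih, add_assoc]

theorem moveCost_eq_zero_of_forall_eq {d : M → M → ℝ} {p : M} (hd : d p p = 0)
    (l : List (ℝ × M)) (h : ∀ mv ∈ l, mv.2 = p) : moveCost d p l = 0 := by
  induction l with
  | nil => rfl
  | cons a l ih =>
    simp only [List.forall_mem_cons] at h
    simp only [moveCost, h.1, hd, ih h.2, add_zero]

theorem moveCost_append_singleton_le {d : M → M → ℝ} (h : M → ℝ)
    (hd : ∀ x y, d x y ≤ h x + h y) (mv : ℝ × M) (l : List (ℝ × M)) (q : M) :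
    moveCost d q (l ++ [mv]) ≤ h q + 2 * (l.map fun a => h a.2).sum + h mv.2 := by
  induction l generalizing q with
  | nil => simpa [moveCost] using hd q mv.2
  | cons a l ih =>
    simp only [List.cons_append, moveCost, List.map_cons, List.sum_cons]
    linarith [hd q a.2, ih a.2]

noncomputable def waitAt (p : M) (T : Finset ℝ) : List (ℝ × M) :=
  (T.sort (· ≤ ·)).map (·, p)

theorem mem_waitAt {p : M} {T : Finset ℝ} {mv : ℝ × M} :
    mv ∈ waitAt p T ↔ mv.1 ∈ T ∧ mv.2 = p := by
  obtain ⟨t, q⟩ := mv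
  simp [waitAt, eq_comm]

theorem pairwise_waitAt (p : M) (T : Finset ℝ) :
    (waitAt p T).Pairwise (fun a b => a.1 ≤ b.1) :=
  List.pairwise_map.2 (T.pairwise_sort _)

noncomputable def tourThenWait (tour : List M) (p : M) (I : Finset (OSDRequest M)) :
    List (ℝ × M) :=
  tour.map (Prod.mk 0) ++ (0, p) :: waitAt p (I.image OSDRequest.arrival)

variable {tour : List M} {p : M} {I : Finset (OSDRequest M)}

theorem validSchedule_tourThenWait : ValidSchedule (tourThenWait tour p I) := by
  have hwait : ∀ mv ∈ waitAt p (I.image OSDRequest.arrival), 0 ≤ mv.1 := by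
    intro mv hmv
    obtain ⟨r, -, hr⟩ := Finset.mem_image.1 (mem_waitAt.1 hmv).1
    exact hr ▸ r.arrival_nonneg
  have hzero : ∀ mv ∈ tour.map (Prod.mk (0 : ℝ)), mv.1 = 0 := by simp
  refine validSchedule_of_pairwise ?_ ?_
  · refine List.pairwise_append.2 ⟨?_, ?_, ?_⟩
    · exact List.pairwise_map.2 (List.pairwise_of_forall fun _ _ => le_rfl)
    · exact List.pairwise_cons.2 ⟨hwait, pairwise_waitAt _ _⟩
    · intro a ha b hb
      rw [hzero a ha]
      rcases List.mem_cons.1 hb with rfl | hb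
      exacts [le_rfl, hwait b hb]
  · intro mv hmv
    rcases List.mem_append.1 hmv with h | h
    · exact (hzero mv h).ge
    · rcases List.mem_cons.1 h with rfl | h
      exacts [le_rfl, hwait mv h]

theorem mem_tourThenWait_of_point_eq {r : OSDRequest M} (hr : r ∈ I) (hp : r.point = p) :
    (r.arrival, r.point) ∈ tourThenWait tour p I :=
  List.mem_append_right _ <| List.mem_cons_of_mem _ <|
    mem_waitAt.2 ⟨Finset.mem_image_of_mem _ hr, hp⟩

theorem mem_tourThenWait_of_mem_tour {r : OSDRequest M} (h0 : r.arrival = 0)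
    (hp : r.point ∈ tour) : (r.arrival, r.point) ∈ tourThenWait tour p I :=
  List.mem_append_left _ <| h0 ▸ List.mem_map_of_mem hp

theorem moveCost_tourThenWait (d : M → M → ℝ) (hd : d p p = 0) (q : M) :
    moveCost d q (tourThenWait tour p I) = moveCost d q (tour.map (Prod.mk 0) ++ [(0, p)]) := by
  rw [tourThenWait, moveCost_append_cons, moveCost_eq_zero_of_forall_eq hd _
    fun mv hmv => (mem_waitAt.1 hmv).2, add_zero]

end Schedules

section Star

variable {m n : ℕ} {W L : ℝ}

theorem starVtr_nonneg (hW : 0 ≤ W) (x : Option (Fin n)) : 0 ≤ starVtr n W x := by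
  rcases x with _ | i
  · exact le_rfl
  · dsimp only [starVtr]
    split_ifs
    exacts [hW, zero_le_one]

theorem starDist_le (hW : 0 ≤ W) (x y : Option (Fin n)) :
    starDist n W x y ≤ starVtr n W x + starVtr n W y := by
  unfold starDist
  split_ifs
  exacts [add_nonneg (starVtr_nonneg hW x) (starVtr_nonneg hW y), le_rfl]

def starLeaves (m : ℕ) : List (Option (Fin (m + 1))) :=
  (List.finRange m).map fun i => some i.succ

theorem mem_starLeaves {i : Fin (m + 1)} (hi : i ≠ 0) : some i ∈ starLeaves m := by
  obtain ⟨j, rfl⟩ := Fin.exists_succ_eq.2 hi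
  exact List.mem_map_of_mem (List.mem_finRange j)

theorem moveCost_starLeaves_le (hW : 0 ≤ W) :
    moveCost (starDist (m + 1) W) (some 0)
      ((starLeaves m).map (Prod.mk 0) ++ [(0, some 0)]) ≤ 2 * (m + W) := by
  have hleaves : ((starLeaves m).map (starVtr (m + 1) W)).sum = m := by
    simp [starLeaves, Function.comp_def, starVtr]
  have hroot : starVtr (m + 1) W (some 0) = W := by simp [starVtr]
  have := moveCost_append_singleton_le _ (starDist_le hW) ((0 : ℝ), some (0 : Fin (m + 1)))
    ((starLeaves m).map (Prod.mk 0)) (some 0)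
  simp only [List.map_map, Function.comp_def, hroot] at this
  linarith

theorem Stmt8Inst.penalty_zero {r : OSDRequest (Option (Fin n))} (h : Stmt8Inst n W L r) :
    r.penalty 0 = 0 := by
  rcases h with ⟨_, -, -, -, hp⟩ | ⟨-, hp, -⟩ <;> simp [hp]

theorem Stmt8Inst.point_eq_zero_or {r : OSDRequest (Option (Fin (m + 1)))}
    (h : Stmt8Inst (m + 1) W L r) :
    r.point = some 0 ∨ r.arrival = 0 ∧ r.point ∈ starLeaves m := by
  rcases h with ⟨i, hi, hp, h0, -⟩ | ⟨⟨i, hi, hp⟩, -⟩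
  · exact Or.inr ⟨h0, hp ▸ mem_starLeaves (Fin.pos_iff_ne_zero.1 hi)⟩
  · exact Or.inl (hp.trans (congrArg some (Fin.ext hi)))

end Star

theorem star_instance_cheap_schedule_general (n : ℕ) (W L : ℝ) (hW : 1 ≤ W)
    (I : Finset (OSDRequest (Option (Fin n))))
    (hI : ∀ r, r ∈ I ↔ Stmt8Inst n W L r)
    (i0 : Fin n) (hi0 : (i0 : ℕ) = 0) :
    ∃ S : List (ℝ × Option (Fin n)), IsSchedule I S ∧
      schedCost (starDist n W) (some i0) I S ≤ 2 * ((n : ℝ) + W) := by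
  obtain ⟨m, rfl⟩ := Nat.exists_eq_add_one_of_ne_zero i0.pos.ne'
  obtain rfl : i0 = 0 := Fin.ext hi0
  have hserved : ∀ r ∈ I, (r.arrival, r.point) ∈ tourThenWait (starLeaves m) (some 0) I := by
    intro r hr
    rcases ((hI r).1 hr).point_eq_zero_or with hp | ⟨h0, hp⟩
    exacts [mem_tourThenWait_of_point_eq hr hp, mem_tourThenWait_of_mem_tour h0 hp]
  refine ⟨_, isSchedule_of_forall_mem validSchedule_tourThenWait hserved, ?_⟩
  rw [schedCost_eq_of_forall_mem _ _ hserved,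
    Finset.sum_eq_zero fun r hr => ((hI r).1 hr).penalty_zero, add_zero,
    moveCost_tourThenWait _ (by simp [starDist])]
  calc _ ≤ 2 * ((m : ℝ) + W) := moveCost_starLeaves_le (by linarith)
    _ ≤ 2 * (((m + 1 : ℕ) : ℝ) + W) := by push_cast; linarith

/-- For every value of the rate `L`, the instance above admits
a schedule of total cost at most `2(n + W)` (serve everything at time `0` by a
tour from `p 0` through `p 1, …, p (n-1)` and back, then serve each later
request at `p 0` at its arrival time). -/
theorem star_instance_cheap_schedule (n : ℕ) (W L : ℝ) (hn : 2 ≤ n) (hW : 1 ≤ W)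
    (hL : 0 ≤ L)
    (I : Finset (OSDRequest (Option (Fin n))))
    (hI : ∀ r, r ∈ I ↔ Stmt8Inst n W L r)
    (i0 : Fin n) (hi0 : (i0 : ℕ) = 0) :
    ∃ S : List (ℝ × Option (Fin n)), IsSchedule I S ∧
      schedCost (starDist n W) (some i0) I S ≤ 2 * ((n : ℝ) + W) :=
  star_instance_cheap_schedule_general n W L hW I hI i0 hi0
end

section
/- Consider the following OSD instance. The metric space is the star with center c and points p_0, p_1, …, p_{n−1} (n ≥ 2), where d(p_0,c) = W for some W ≥ 1, d(p_i,c) = 1 for 1 ≤ i ≤ n−1, and distances between points are sums along the star. The server starts at p_0. For each 1 ≤ i ≤ n−1 there is a request at p_i arriving at time 0 with penalty function f(t) = (W+1)^{i+1}·t; in addition, p_0 receives a request arriving at time 0 and a request arriving at each time (W+1)^{−i} for i = 0,1,…,n−2, each with penalty function f(t) = L·t, where L ≥ 0 is an arbitrary parameter. Then every schedule that, for each 1 ≤ i ≤ n−1, serves the request at p_i at a time greater than or equal to (W+1)^{−i} (the time at which that request becomes critical) has total cost at least (n−1)·(W+1). -/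
lemma moveCost_nonneg' {M : Type} (d : M → M → ℝ) (hd : ∀ x y, 0 ≤ d x y) :
    ∀ (S : List (ℝ × M)) (q : M), 0 ≤ moveCost d q S
  | [], _ => le_refl 0
  | mv :: rest, q => add_nonneg (hd q mv.2) (moveCost_nonneg' d hd rest mv.2)

noncomputable def starReq (n : ℕ) (W : ℝ) (hW : 0 ≤ W + 1) (i : Fin n) :
    OSDRequest (Option (Fin n)) where
  point := some i
  arrival := 0
  arrival_nonneg := le_refl 0
  penalty := fun t => (W + 1) ^ ((i : ℕ) + 1) * max t 0
  penalty_nonneg := fun t => mul_nonneg (pow_nonneg hW _) (le_max_right _ _)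
  penalty_mono := fun a b h =>
    mul_le_mul_of_nonneg_left (max_le_max h le_rfl) (pow_nonneg hW _)

/-- Every schedule that serves the request at `p i` no earlier
than time `(W+1)^(-i)` (the time at which it becomes critical), for each
`1 ≤ i ≤ n-1`, has total cost at least `(n-1)·(W+1)`. -/
theorem star_instance_lazy_lower_bound (n : ℕ) (W L : ℝ) (hn : 2 ≤ n) (hW : 1 ≤ W)
    (hL : 0 ≤ L)
    (I : Finset (OSDRequest (Option (Fin n))))
    (hI : ∀ r, r ∈ I ↔ Stmt8Inst n W L r)
    (i0 : Fin n) (hi0 : (i0 : ℕ) = 0)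
    (S : List (ℝ × Option (Fin n))) (hS : IsSchedule I S)
    (hlazy : ∀ r ∈ I, ∀ i : Fin n, 1 ≤ (i : ℕ) → r.point = some i →
      (W + 1) ^ (-((i : ℕ) : ℤ)) ≤ serveTime S r) :
    ((n : ℝ) - 1) * (W + 1) ≤ schedCost (starDist n W) (some i0) I S := by
  classical
  have hW0 : (0:ℝ) < W + 1 := by linarith
  have hWnn : (0:ℝ) ≤ W + 1 := le_of_lt hW0
  have hvtr : ∀ x : Option (Fin n), 0 ≤ starVtr n W x := by
    rintro (_ | i) <;> simp [starVtr]
    split <;> linarith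
  have hdist : ∀ x y : Option (Fin n), 0 ≤ starDist n W x y := by
    intro x y
    unfold starDist
    split
    · exact le_refl 0
    · exact add_nonneg (hvtr x) (hvtr y)
  have hmove : 0 ≤ moveCost (starDist n W) (some i0) S :=
    moveCost_nonneg' _ hdist S _
  -- the requests at p_i, 1 ≤ i
  set T : Finset (Fin n) := Finset.univ.filter (fun i : Fin n => 1 ≤ (i : ℕ)) with hT
  set f : Fin n → OSDRequest (Option (Fin n)) := starReq n W hWnn with hf
  have hmem : ∀ i ∈ T, f i ∈ I := by
    intro i hi
    rw [hT, Finset.mem_filter] at hi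
    exact (hI _).mpr (Or.inl ⟨i, hi.2, rfl, rfl, rfl⟩)
  have hinj : ∀ i ∈ T, ∀ j ∈ T, f i = f j → i = j := by
    intro i _ j _ h
    have := congrArg OSDRequest.point h
    simpa [hf, starReq] using this
  have hsub : T.image f ⊆ I := by
    intro r hr
    rcases Finset.mem_image.mp hr with ⟨i, hi, rfl⟩
    exact hmem i hi
  -- lower bound each penalty
  have hkey : ∀ i ∈ T, W + 1 ≤ (f i).penalty (serveTime S (f i) - (f i).arrival) := by
    intro i hi
    rw [hT, Finset.mem_filter] at hi
    have hst : (W + 1) ^ (-((i : ℕ) : ℤ)) ≤ serveTime S (f i) :=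
      hlazy _ (hmem i (by rw [hT, Finset.mem_filter]; exact hi)) i hi.2 rfl
    have hzpos : (0:ℝ) < (W + 1) ^ (-((i : ℕ) : ℤ)) := zpow_pos hW0 _
    have harr : (f i).arrival = 0 := rfl
    have hpen : (f i).penalty (serveTime S (f i) - (f i).arrival)
        = (W + 1) ^ ((i : ℕ) + 1) * max (serveTime S (f i)) 0 := by
      rw [harr, sub_zero]; rfl
    rw [hpen]
    have hmax : (W + 1) ^ (-((i : ℕ) : ℤ)) ≤ max (serveTime S (f i)) 0 :=
      le_max_of_le_left hst
    calc W + 1 = (W + 1) ^ ((i : ℕ) + 1) * (W + 1) ^ (-((i : ℕ) : ℤ)) := by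
          rw [← zpow_natCast (W + 1) ((i : ℕ) + 1), ← zpow_add₀ (ne_of_gt hW0)]
          have : (((i : ℕ) + 1 : ℕ) : ℤ) + (-((i : ℕ) : ℤ)) = 1 := by push_cast; ring
          rw [this, zpow_one]
      _ ≤ (W + 1) ^ ((i : ℕ) + 1) * max (serveTime S (f i)) 0 :=
          mul_le_mul_of_nonneg_left hmax (pow_nonneg hWnn _)
  -- cardinality of T
  have hcard : T.card = n - 1 := by
    have h0 : Finset.univ.filter (fun i : Fin n => ¬ 1 ≤ (i : ℕ)) = {(⟨0, by omega⟩ : Fin n)} := by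
      ext j
      simp only [Finset.mem_filter, Finset.mem_univ, true_and, Finset.mem_singleton, Fin.ext_iff]
      omega
    have := Finset.card_filter_add_card_filter_not
      (s := (Finset.univ : Finset (Fin n))) (p := fun i : Fin n => 1 ≤ (i : ℕ))
    rw [h0] at this
    simp only [Finset.card_singleton, Finset.card_univ, Fintype.card_fin] at this
    rw [hT]
    omega
  -- put it together
  have hsum1 : ∑ r ∈ T.image f, r.penalty (serveTime S r - r.arrival)
      ≤ ∑ r ∈ I, r.penalty (serveTime S r - r.arrival) :=
    Finset.sum_le_sum_of_subset_of_nonneg hsub (fun r _ _ => r.penalty_nonneg _)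
  have hsum2 : ∑ r ∈ T.image f, r.penalty (serveTime S r - r.arrival)
      = ∑ i ∈ T, (f i).penalty (serveTime S (f i) - (f i).arrival) :=
    Finset.sum_image hinj
  have hsum3 : ((n : ℝ) - 1) * (W + 1) ≤ ∑ i ∈ T, (f i).penalty (serveTime S (f i) - (f i).arrival) := by
    calc ((n : ℝ) - 1) * (W + 1) = ∑ _i ∈ T, (W + 1) := by
          rw [Finset.sum_const, hcard, nsmul_eq_mul]
          congr 1
          push_cast [Nat.cast_sub (by omega : 1 ≤ n)]
          ring
      _ ≤ _ := Finset.sum_le_sum hkey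
  unfold schedCost
  have := hsum3.trans (le_of_eq hsum2.symm)
  linarith [this.trans hsum1]
end

section
/- Consider the following OSD instance with deadline penalties. The metric space is the star with center c and points p_0, p_1, …, p_{n−1} (n ≥ 2), where d(p_0,c) = W for some W ≥ 1, d(p_i,c) = 1 for 1 ≤ i ≤ n−1, and distances between points are sums along the star. The server starts at p_0. For each 1 ≤ i ≤ n−1 there is a request at p_i arriving at time 0 with penalty function f_i(t) = 0 for t ≤ i and f_i(t) = ∞ for t > i; for each j = 0,1,…,n−1 there is a request at p_0 arriving at time j with penalty function f(t) = 0 for t = 0 and f(t) = ∞ for t > 0 (penalty functions take values in [0,∞]). Then every schedule of finite total cost that, for each 1 ≤ i ≤ n−1, serves the request at p_i at a time greater than or equal to i (i.e., never serves it strictly before its deadline) has movement cost at least (n−1)·(W+1). -/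
open scoped ENNReal

/-- An OSD request whose delay penalty takes values in `[0,∞]`. -/
structure OSDRequestE (M : Type) where
  point : M
  arrival : ℝ
  arrival_nonneg : 0 ≤ arrival
  penalty : ℝ → ℝ≥0∞
  penalty_mono : Monotone penalty

def ServesReqE {M : Type} (S : List (ℝ × M)) (r : OSDRequestE M) : Prop :=
  ∃ mv ∈ S, r.arrival ≤ mv.1 ∧ mv.2 = r.point

noncomputable def serveTimeE {M : Type} (S : List (ℝ × M)) (r : OSDRequestE M) : ℝ :=
  sInf {t : ℝ | ∃ mv ∈ S, mv.1 = t ∧ r.arrival ≤ t ∧ mv.2 = r.point}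
/-- The deadline instance of Fig. 2: for each `1 ≤ i ≤ n-1`, a request at `p i`
arriving at time `0` with deadline `i` (penalty `0` up to delay `i`, `∞`
afterwards); at `p 0`, a request arriving at each time `j = 0,…,n-1` that must
be served immediately (penalty `0` at delay `0`, `∞` afterwards). -/
def DeadlineInst (n : ℕ) (r : OSDRequestE (Option (Fin n))) : Prop :=
  (∃ i : Fin n, 1 ≤ (i : ℕ) ∧ r.point = some i ∧ r.arrival = 0 ∧
      r.penalty = fun t => if t ≤ ((i : ℕ) : ℝ) then 0 else ⊤) ∨
  ((∃ i0 : Fin n, (i0 : ℕ) = 0 ∧ r.point = some i0) ∧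
      (∃ j : Fin n, r.arrival = ((j : ℕ) : ℝ)) ∧
      r.penalty = fun t => if t ≤ 0 then 0 else ⊤)

/-! Finite penalty forces the request at `p i` to be served by its deadline `i`, and laziness
forbids serving it earlier, so the server is at `p i` at time `i`; the request at `p 0` arriving
at time `i` puts the server at `p 0` at time `i` as well. In a time-sorted schedule the moves made
at time `i` form a contiguous stretch, which therefore covers at least `d(p i, p 0) = W + 1`, and
these stretches are disjoint for different `i`. -/

theorem moveCost_append {M : Type} (d : M → M → ℝ) (q : M) (S₁ S₂ : List (ℝ × M)) :
    ∃ q', moveCost d q (S₁ ++ S₂) = moveCost d q S₁ + moveCost d q' S₂ := by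
  induction S₁ generalizing q with
  | nil => exact ⟨q, (zero_add _).symm⟩
  | cons m S₁ ih =>
    obtain ⟨q', hq'⟩ := ih m.2
    refine ⟨q', ?_⟩
    simp only [List.cons_append, moveCost, hq']
    ring

theorem ValidSchedule.pairwise {M : Type} {S : List (ℝ × M)} (hS : ValidSchedule S) :
    S.Pairwise fun a b => a.1 ≤ b.1 :=
  @List.IsChain.pairwise _ _ _ ⟨le_trans⟩ hS.1

theorem exists_eq_append_of_pairwise_fst_le {M : Type} {S : List (ℝ × M)}
    (hS : S.Pairwise fun a b => a.1 ≤ b.1) (t : ℝ) :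
    ∃ S₁ S₂, S = S₁ ++ S₂ ∧ (∀ m ∈ S₁, m.1 < t) ∧ ∀ m ∈ S₂, t ≤ m.1 := by
  induction S with
  | nil => exact ⟨[], [], rfl, by simp, by simp⟩
  | cons m S ih =>
    obtain ⟨hm, hS⟩ := List.pairwise_cons.mp hS
    by_cases hmt : m.1 < t
    · obtain ⟨S₁, S₂, rfl, h₁, h₂⟩ := ih hS
      exact ⟨m :: S₁, S₂, rfl, by simpa [hmt] using h₁, h₂⟩
    · refine ⟨[], m :: S, rfl, by simp, ?_⟩
      simp only [List.mem_cons, forall_eq_or_imp]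
      exact ⟨not_lt.mp hmt, fun m' hm' => (not_lt.mp hmt).trans (hm m' hm')⟩

structure IsPseudoMetric {M : Type} (d : M → M → ℝ) : Prop where
  self_eq_zero : ∀ x, d x x = 0
  symm : ∀ x y, d x y = d y x
  triangle : ∀ x y z, d x z ≤ d x y + d y z

namespace IsPseudoMetric

variable {M : Type} {d : M → M → ℝ}

theorem nonneg (hd : IsPseudoMetric d) (x y : M) : 0 ≤ d x y := by
  have := hd.triangle x y x
  rw [hd.self_eq_zero, hd.symm y x] at this
  linarith

theorem moveCost_nonneg (hd : IsPseudoMetric d) (q : M) (S : List (ℝ × M)) :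
    0 ≤ moveCost d q S := by
  induction S generalizing q with
  | nil => exact le_rfl
  | cons m S ih => exact add_nonneg (hd.nonneg _ _) (ih _)

theorem dist_le_add_moveCost (hd : IsPseudoMetric d) (x q : M) {S : List (ℝ × M)}
    {mv : ℝ × M} (hmv : mv ∈ S) : d x mv.2 ≤ d x q + moveCost d q S := by
  induction S generalizing q with
  | nil => simp at hmv
  | cons m S ih =>
    have hcost : moveCost d q (m :: S) = d q m.2 + moveCost d m.2 S := rfl
    have htri := hd.triangle x q m.2
    rcases List.mem_cons.mp hmv with rfl | hmv
    · linarith [hd.moveCost_nonneg mv.2 S]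
    · linarith [ih m.2 hmv]

theorem dist_le_moveCost (hd : IsPseudoMetric d) (q : M) {S : List (ℝ × M)}
    {mx my : ℝ × M} (hx : mx ∈ S) (hy : my ∈ S) : d mx.2 my.2 ≤ moveCost d q S := by
  induction S generalizing q with
  | nil => simp at hx
  | cons m S ih =>
    have hcost : moveCost d q (m :: S) = d q m.2 + moveCost d m.2 S := rfl
    have hqm := hd.nonneg q m.2
    rcases List.mem_cons.mp hx with hxm | hx <;> rcases List.mem_cons.mp hy with hym | hy
    · rw [hxm, hym, hd.self_eq_zero]
      exact hd.moveCost_nonneg q _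
    · rw [hxm]
      linarith [hd.dist_le_add_moveCost m.2 m.2 hy, hd.self_eq_zero m.2]
    · rw [hym, hd.symm]
      linarith [hd.dist_le_add_moveCost m.2 m.2 hx, hd.self_eq_zero m.2]
    · linarith [ih m.2 hx hy]

theorem sum_le_moveCost {ι : Type} (hd : IsPseudoMetric d) (τ : ι → ℝ) (x y : ι → M)
    (T : Finset ι) (hτ : Set.InjOn τ T) {S : List (ℝ × M)}
    (hS : S.Pairwise fun a b => a.1 ≤ b.1) (hx : ∀ i ∈ T, (τ i, x i) ∈ S)
    (hy : ∀ i ∈ T, (τ i, y i) ∈ S) (q : M) :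
    ∑ i ∈ T, d (x i) (y i) ≤ moveCost d q S := by
  classical
  induction T using Finset.induction_on_max_value τ generalizing S q with
  | empty => simpa using hd.moveCost_nonneg q S
  | insert a T haT hmax ih =>
    obtain ⟨S₁, S₂, rfl, h₁, h₂⟩ := exists_eq_append_of_pairwise_fst_le hS (τ a)
    obtain ⟨q', hq'⟩ := moveCost_append d q S₁ S₂
    have hlt : ∀ i ∈ T, τ i < τ a := fun i hi => (hmax i hi).lt_of_ne fun h =>
      haT (hτ (Finset.mem_insert_of_mem hi) (Finset.mem_insert_self a T) h ▸ hi)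
    have hmem₁ : ∀ i ∈ T, ∀ z, (τ i, z) ∈ S₁ ++ S₂ → (τ i, z) ∈ S₁ := fun i hi z hz =>
      (List.mem_append.mp hz).resolve_right fun h => (h₂ _ h).not_gt (hlt i hi)
    have hmem₂ : ∀ z, (τ a, z) ∈ S₁ ++ S₂ → (τ a, z) ∈ S₂ := fun z hz =>
      (List.mem_append.mp hz).resolve_left fun h => (h₁ _ h).false
    rw [Finset.sum_insert haT, hq', add_comm]
    gcongr ?_ + ?_
    · exact ih (hτ.mono (by simp)) (List.pairwise_append.mp hS).1
        (fun i hi => hmem₁ i hi _ (hx i (Finset.mem_insert_of_mem hi)))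
        (fun i hi => hmem₁ i hi _ (hy i (Finset.mem_insert_of_mem hi))) q
    · exact hd.dist_le_moveCost q' (hmem₂ _ (hx a (Finset.mem_insert_self a T)))
        (hmem₂ _ (hy a (Finset.mem_insert_self a T)))

end IsPseudoMetric

theorem isPseudoMetric_starDist (n : ℕ) {W : ℝ} (hW : 0 ≤ W) :
    IsPseudoMetric (starDist n W) where
  self_eq_zero x := if_pos rfl
  symm x y := by
    unfold starDist
    rcases eq_or_ne x y with rfl | h
    · rfl
    · rw [if_neg h, if_neg h.symm, add_comm]
  triangle x y z := by
    have hv : ∀ x, 0 ≤ starVtr n W x := by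
      rintro (_ | i)
      · exact le_rfl
      · simp only [starVtr]; split_ifs <;> linarith
    have := hv x; have := hv y; have := hv z
    unfold starDist
    split_ifs <;> subst_vars <;> first | linarith | simp_all

theorem starDist_some_some_zero {n : ℕ} (W : ℝ) {i i0 : Fin n} (hi : 1 ≤ (i : ℕ))
    (hi0 : (i0 : ℕ) = 0) : starDist n W (some i) (some i0) = W + 1 := by
  have hi' : (i : ℕ) ≠ 0 := Nat.one_le_iff_ne_zero.1 hi
  have hne : some i ≠ some i0 := fun h => hi' (by rw [Option.some_inj.mp h, hi0])
  simp only [starDist, starVtr, if_neg hne, if_neg hi', if_pos hi0, add_comm]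

noncomputable def deadlinePenalty (D : ℝ) : ℝ → ℝ≥0∞ := fun t => if t ≤ D then 0 else ⊤

theorem monotone_deadlinePenalty (D : ℝ) : Monotone (deadlinePenalty D) := by
  intro a b hab
  unfold deadlinePenalty
  split_ifs <;> first | exact le_rfl | exact le_top | linarith

theorem serveTimeE_mem {M : Type} {S : List (ℝ × M)} {r : OSDRequestE M}
    (h : ServesReqE S r) : (serveTimeE S r, r.point) ∈ S ∧ r.arrival ≤ serveTimeE S r := by
  have hne : {t : ℝ | ∃ mv ∈ S, mv.1 = t ∧ r.arrival ≤ t ∧ mv.2 = r.point}.Nonempty := by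
    obtain ⟨mv, hmv, h1, h2⟩ := h
    exact ⟨mv.1, mv, hmv, rfl, h1, h2⟩
  have hfin : {t : ℝ | ∃ mv ∈ S, mv.1 = t ∧ r.arrival ≤ t ∧ mv.2 = r.point}.Finite :=
    (S.finite_toSet.image Prod.fst).subset fun t ⟨mv, hmv, ht, _⟩ => ⟨mv, hmv, ht⟩
  obtain ⟨mv, hmv, h1, h2, h3⟩ := hne.csInf_mem hfin
  refine ⟨?_, h2⟩
  rw [serveTimeE, ← h1, ← h3]
  exact hmv

theorem mem_of_deadlinePenalty_ne_top {M : Type} {S : List (ℝ × M)} {r : OSDRequestE M}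
    {D : ℝ} (hserve : ServesReqE S r) (hpen : r.penalty = deadlinePenalty D)
    (hfin : r.penalty (serveTimeE S r - r.arrival) ≠ ⊤)
    (hlate : r.arrival + D ≤ serveTimeE S r) : (r.arrival + D, r.point) ∈ S := by
  have hearly : serveTimeE S r - r.arrival ≤ D := by
    by_contra h
    exact hfin (by rw [hpen, deadlinePenalty, if_neg h])
  convert (serveTimeE_mem hserve).1 using 2
  linarith

theorem deadline_star_lazy_lower_bound_general (n : ℕ) (W : ℝ) (hW : 1 ≤ W)
    (I : Finset (OSDRequestE (Option (Fin n))))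
    (hI : ∀ r, r ∈ I ↔ DeadlineInst n r)
    (i0 : Fin n) (hi0 : (i0 : ℕ) = 0)
    (S : List (ℝ × Option (Fin n)))
    (hvalid : ValidSchedule S) (hserve : ∀ r ∈ I, ServesReqE S r)
    (hfin : (∑ r ∈ I, r.penalty (serveTimeE S r - r.arrival)) ≠ ⊤)
    (hlazy : ∀ r ∈ I, ∀ i : Fin n, 1 ≤ (i : ℕ) → r.point = some i →
      ((i : ℕ) : ℝ) ≤ serveTimeE S r) :
    ((n : ℝ) - 1) * (W + 1) ≤ moveCost (starDist n W) (some i0) S := by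
  have hone : ∀ i ∈ Finset.univ.erase i0, 1 ≤ (i : ℕ) := fun i hi =>
    Nat.one_le_iff_ne_zero.2 fun h => Finset.ne_of_mem_erase hi (Fin.ext (h.trans hi0.symm))
  have hmem (r) (hr : r ∈ I) {D} (hpen : r.penalty = deadlinePenalty D) :=
    mem_of_deadlinePenalty_ne_top (hserve r hr) hpen (ENNReal.sum_ne_top.mp hfin r hr)
  have hvisit : ∀ i ∈ Finset.univ.erase i0, (((i : ℕ) : ℝ), some i) ∈ S := fun i hi => by
    let r : OSDRequestE (Option (Fin n)) :=
      ⟨some i, 0, le_rfl, deadlinePenalty i, monotone_deadlinePenalty _⟩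
    have hr : r ∈ I := (hI r).2 (Or.inl ⟨i, hone i hi, rfl, rfl, rfl⟩)
    simpa [r] using hmem r hr rfl (by simpa [r] using hlazy r hr i (hone i hi) rfl)
  have hvisit₀ : ∀ i ∈ Finset.univ.erase i0, (((i : ℕ) : ℝ), some i0) ∈ S := fun i _ => by
    let r : OSDRequestE (Option (Fin n)) :=
      ⟨some i0, i, Nat.cast_nonneg _, deadlinePenalty 0, monotone_deadlinePenalty _⟩
    have hr : r ∈ I := (hI r).2 (Or.inr ⟨⟨i0, hi0, rfl⟩, ⟨i, rfl⟩, rfl⟩)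
    simpa [r] using hmem r hr rfl (by simpa using (serveTimeE_mem (hserve r hr)).2)
  calc ((n : ℝ) - 1) * (W + 1)
      = ∑ i ∈ Finset.univ.erase i0, starDist n W (some i) (some i0) := by
        rw [Finset.sum_congr rfl fun i hi => starDist_some_some_zero W (hone i hi) hi0,
          Finset.sum_const, Finset.card_erase_of_mem (Finset.mem_univ _), Finset.card_univ,
          Fintype.card_fin, nsmul_eq_mul, Nat.cast_pred i0.pos]
    _ ≤ moveCost (starDist n W) (some i0) S :=
        (isPseudoMetric_starDist n (by linarith)).sum_le_moveCost
          (fun i : Fin n => ((i : ℕ) : ℝ)) some (fun _ => some i0) _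
          (fun i _ j _ h => Fin.ext (Nat.cast_injective h)) hvalid.pairwise hvisit hvisit₀ _

/-- Every finite-cost schedule for the deadline instance that
serves the request at `p i` no earlier than time `i` (its deadline), for each
`1 ≤ i ≤ n-1`, has movement cost at least `(n-1)·(W+1)`. -/
theorem deadline_star_lazy_lower_bound (n : ℕ) (W : ℝ) (hn : 2 ≤ n) (hW : 1 ≤ W)
    (I : Finset (OSDRequestE (Option (Fin n))))
    (hI : ∀ r, r ∈ I ↔ DeadlineInst n r)
    (i0 : Fin n) (hi0 : (i0 : ℕ) = 0)
    (S : List (ℝ × Option (Fin n)))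
    (hvalid : ValidSchedule S) (hserve : ∀ r ∈ I, ServesReqE S r)
    (hfin : (∑ r ∈ I, r.penalty (serveTimeE S r - r.arrival)) ≠ ⊤)
    (hlazy : ∀ r ∈ I, ∀ i : Fin n, 1 ≤ (i : ℕ) → r.point = some i →
      ((i : ℕ) : ℝ) ≤ serveTimeE S r) :
    ((n : ℝ) - 1) * (W + 1) ≤ moveCost (starDist n W) (some i0) S :=
  deadline_star_lazy_lower_bound_general n W hW I hI i0 hi0 S hvalid hserve hfin hlazy
end
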